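/- Let W = ℚ(q)^{2m} with basis v_1,...,v_{2m}, and define E on W ⊗ W by: E(v_{2i-1}⊗v_{2i}) = q^{-3(i-1)}·∑_{j=1}^m q^{2m-2-j}(v_{2j-1}⊗v_{2j} - q v_{2j}⊗v_{2j-1}); E(v_{2i}⊗v_{2i-1}) = -q·E(v_{2i-1}⊗v_{2i}); and E(v_a⊗v_b) = 0 for all other pairs (a,b). Then E² = ((q^{2m} - q^{-2m})/(q - q⁻¹))·E. -/

import Mathlib

set_option synthInstance.maxHeartbeats 1000000
set_option maxHeartbeats 2000000
open TensorProduct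

/-- The indeterminate `q`, generating the field `ℚ(q)` of rational functions. -/
noncomputable def qK : RatFunc ℚ := RatFunc.X

/-- The standard basis `v_1, …, v_{2m}` of `W = ℚ(q)^{2m}` (0-indexed). -/
noncomputable def bW (m : ℕ) : Module.Basis (Fin (2 * m)) (RatFunc ℚ) (Fin (2 * m) → RatFunc ℚ) :=
  Pi.basisFun _ _

/-- The basis `v_a ⊗ v_b` of `W ⊗ W`. -/
noncomputable def bWW (m : ℕ) :
    Module.Basis (Fin (2 * m) × Fin (2 * m)) (RatFunc ℚ)
      ((Fin (2 * m) → RatFunc ℚ) ⊗[RatFunc ℚ] (Fin (2 * m) → RatFunc ℚ)) :=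
  (bW m).tensorProduct (bW m)

/-- The vector `E(v_{2i-1} ⊗ v_{2i}) = q^{-3(i-1)} ∑_{j=1}^m q^{2m-2-j}
(v_{2j-1} ⊗ v_{2j} - q v_{2j} ⊗ v_{2j-1})` (with all `κ_j = 1`); `i` is 1-based. -/
noncomputable def Evec (m : ℕ) (i : ℕ) :
    (Fin (2 * m) → RatFunc ℚ) ⊗[RatFunc ℚ] (Fin (2 * m) → RatFunc ℚ) :=
  qK ^ (-(3 : ℤ) * ((i : ℤ) - 1)) •
    ∑ jf : Fin m,
      qK ^ (2 * (m : ℤ) - 2 - (((jf : ℕ) : ℤ) + 1)) •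
        (bWW m (⟨2 * (jf : ℕ), by have := jf.isLt; omega⟩,
                ⟨2 * (jf : ℕ) + 1, by have := jf.isLt; omega⟩) -
          qK • bWW m (⟨2 * (jf : ℕ) + 1, by have := jf.isLt; omega⟩,
                      ⟨2 * (jf : ℕ), by have := jf.isLt; omega⟩))

/-- The type AII action of the `q`-Brauer generator `e` on `W ⊗ W`:
`E(v_{2i-1} ⊗ v_{2i}) = Evec m i`, `E(v_{2i} ⊗ v_{2i-1}) = -q · Evec m i`, and
`E(v_a ⊗ v_b) = 0` for all other pairs. -/
noncomputable def EopAII (m : ℕ) :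
    ((Fin (2 * m) → RatFunc ℚ) ⊗[RatFunc ℚ] (Fin (2 * m) → RatFunc ℚ)) →ₗ[RatFunc ℚ]
      ((Fin (2 * m) → RatFunc ℚ) ⊗[RatFunc ℚ] (Fin (2 * m) → RatFunc ℚ)) :=
  (bWW m).constr (RatFunc ℚ) fun p =>
    if (p.1 : ℕ) % 2 = 0 ∧ (p.2 : ℕ) = (p.1 : ℕ) + 1 then
      Evec m ((p.1 : ℕ) / 2 + 1)
    else if (p.2 : ℕ) % 2 = 0 ∧ (p.1 : ℕ) = (p.2 : ℕ) + 1 then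
      (-qK) • Evec m ((p.2 : ℕ) / 2 + 1)
    else 0

lemma qK_ne_zero : qK ≠ 0 := RatFunc.X_ne_zero

lemma qK_sub_inv_ne_zero : qK - qK⁻¹ ≠ 0 := by
  rw [sub_ne_zero]
  intro h
  have h2 : qK * qK = 1 := by
    nth_rewrite 2 [h]
    exact mul_inv_cancel₀ qK_ne_zero
  have h3 : (Polynomial.X * Polynomial.X : Polynomial ℚ) = 1 := by
    apply RatFunc.algebraMap_injective ℚ
    simpa [qK, map_mul, RatFunc.algebraMap_X] using h2
  have := congrArg (Polynomial.eval 2) h3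
  norm_num at this

lemma sum_scalar (m : ℕ) :
    ∑ j ∈ Finset.range m, qK ^ (2*(m:ℤ) - 3 - 4*(j:ℤ)) * (1 + qK^2)
      = (qK ^ (2 * (m : ℤ)) - qK ^ (-(2 * (m : ℤ)))) / (qK - qK⁻¹) := by
  rw [eq_div_iff qK_sub_inv_ne_zero, Finset.sum_mul]
  have hsq : qK^2 * qK⁻¹ = qK := by
    rw [sq, mul_assoc, mul_inv_cancel₀ qK_ne_zero, mul_one]
  have key : ∀ e : ℤ, qK^e * (1+qK^2) * (qK - qK⁻¹) = qK^(e+3) - qK^(e-1) := by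
    intro e
    rw [zpow_add₀ qK_ne_zero, zpow_sub₀ qK_ne_zero, zpow_one,
      show (3:ℤ)=((3:ℕ):ℤ) from rfl, zpow_natCast]
    field_simp
    linear_combination
  calc ∑ j ∈ Finset.range m, qK ^ (2*(m:ℤ) - 3 - 4*(j:ℤ)) * (1 + qK^2) * (qK - qK⁻¹)
      = ∑ j ∈ Finset.range m, ((fun j : ℕ => qK ^ (2*(m:ℤ) - 4*(j:ℤ))) j
          - (fun j : ℕ => qK ^ (2*(m:ℤ) - 4*(j:ℤ))) (j+1)) := by
        refine Finset.sum_congr rfl fun j _ => ?_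
        rw [key]
        push_cast
        ring_nf
    _ = qK ^ (2*(m:ℤ) - 4*((0:ℕ):ℤ)) - qK ^ (2*(m:ℤ) - 4*((m:ℕ):ℤ)) := Finset.sum_range_sub' _ m
    _ = qK ^ (2 * (m : ℤ)) - qK ^ (-(2 * (m : ℤ))) := by
        push_cast; ring_nf

lemma EopAII_basis (m : ℕ) (p : Fin (2*m) × Fin (2*m)) :
    EopAII m (bWW m p) =
      if (p.1 : ℕ) % 2 = 0 ∧ (p.2 : ℕ) = (p.1 : ℕ) + 1 then
        Evec m ((p.1 : ℕ) / 2 + 1)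
      else if (p.2 : ℕ) % 2 = 0 ∧ (p.1 : ℕ) = (p.2 : ℕ) + 1 then
        (-qK) • Evec m ((p.2 : ℕ) / 2 + 1)
      else 0 :=
  (bWW m).constr_basis (RatFunc ℚ) _ p

lemma EopAII_b1 (m : ℕ) (j : Fin m) :
    EopAII m (bWW m (⟨2 * (j : ℕ), by have := j.isLt; omega⟩,
        ⟨2 * (j : ℕ) + 1, by have := j.isLt; omega⟩)) = Evec m ((j : ℕ) + 1) := by
  rw [EopAII_basis]
  dsimp only
  rw [if_pos ⟨by omega, rfl⟩]
  congr 1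
  omega

lemma EopAII_b2 (m : ℕ) (j : Fin m) :
    EopAII m (bWW m (⟨2 * (j : ℕ) + 1, by have := j.isLt; omega⟩,
        ⟨2 * (j : ℕ), by have := j.isLt; omega⟩)) = (-qK) • Evec m ((j : ℕ) + 1) := by
  rw [EopAII_basis]
  dsimp only
  rw [if_neg (by omega), if_pos ⟨by omega, rfl⟩]
  congr 2
  omega

lemma Evec_repr (m : ℕ) (i : ℕ) :
    Evec m i = qK ^ (-(3 : ℤ) * ((i : ℤ) - 1)) • Evec m 1 := by
  rw [Evec, Evec]
  norm_num

lemma Ekey (m : ℕ) (i : ℕ) :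
    EopAII m (Evec m i) =
      ((qK ^ (2 * (m : ℤ)) - qK ^ (-(2 * (m : ℤ)))) / (qK - qK⁻¹)) • Evec m i := by
  rw [Evec_repr m i, map_smul, smul_comm]
  congr 1
  have hE1 : ∀ j : Fin m, Evec m ((j : ℕ) + 1)
      = qK ^ (-(3 : ℤ) * ((j : ℕ) : ℤ)) • Evec m 1 := by
    intro j
    rw [Evec_repr]
    congr 2
    push_cast
    ring
  have hterm : ∀ j : Fin m,
      qK ^ (2 * (m : ℤ) - 2 - (((j : ℕ) : ℤ) + 1)) •
          (Evec m ((j : ℕ) + 1) - qK • ((-qK) • Evec m ((j : ℕ) + 1)))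
        = (qK ^ (2*(m:ℤ) - 3 - 4*(((j:ℕ):ℤ))) * (1 + qK^2)) • Evec m 1 := by
    intro j
    rw [hE1 j, show 2*(m:ℤ) - 3 - 4*(((j:ℕ):ℤ))
        = (2 * (m : ℤ) - 2 - (((j : ℕ) : ℤ) + 1)) + (-(3:ℤ) * ((j:ℕ):ℤ)) by ring,
      zpow_add₀ qK_ne_zero]
    simp only [smul_sub, smul_smul, ← sub_smul]
    congr 1
    ring
  nth_rewrite 1 [Evec]
  rw [map_smul, map_sum]
  simp only [map_sub, map_smul, EopAII_b1, EopAII_b2]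
  simp only [hterm]
  rw [← Finset.sum_smul]
  rw [Fin.sum_univ_eq_sum_range (fun j : ℕ => qK ^ (2*(m:ℤ) - 3 - 4*((j:ℕ):ℤ)) * (1 + qK^2)) m]
  rw [sum_scalar m]
  norm_num

/-- `E² = ((q^{2m} - q^{-2m})/(q - q⁻¹)) E` for the type AII tensor space action. -/
theorem Eop_squared_AII (m : ℕ) (hm : 1 ≤ m) :
    EopAII m ∘ₗ EopAII m =
      ((qK ^ (2 * (m : ℤ)) - qK ^ (-(2 * (m : ℤ)))) / (qK - qK⁻¹)) • EopAII m := by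
  apply (bWW m).ext
  intro p
  rw [LinearMap.comp_apply, LinearMap.smul_apply, EopAII_basis]
  split_ifs with h1 h2
  · exact Ekey m _
  · rw [map_smul, Ekey m _, smul_comm]
  · simp
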